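/- Let k ≥ 1 and d ≥ 1 be integers and m = k^d. For each grid point a in I = {((ℓ_1 - 1/2)/k, …, (ℓ_d - 1/2)/k) : ℓ_i ∈ {1,…,k}}, define f_a(x) = (1/(2k) - |x - a|_1)_+ on [0,1]^d. Then the m functions f_a have pairwise disjoint supports (hence are pairwise orthogonal in L²[0,1]^d) and each satisfies ‖f_a‖_{L²}² = (1/(2(d+2)!)) k^{-(d+2)}. -/

import Mathlib

/-!
Each bump vanishes outside the cube of side `1/k` around its centre, these cubes tile `[0,1]^d`,
and centres of distinct bumps differ by at least `1/k` in some coordinate, so no two bumps are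
positive at the same point. Since the support lies in `[0,1]^d`, the squared `L²` norm is a
translate of `∫_{ℝ^d} (r - |x|₁)₊²`. Integrating out one coordinate at a time (Fubini) turns
`∫_{ℝ^{n+1}} (r - |x|₁)₊^(p+1)` into `∫_ℝ (r - |t|)₊^(n+p+1)` times the `n`-dimensional value,
so by induction it equals `2^n (p+1)! r^(n+p+1) / (n+p+1)!`.
-/

open MeasureTheory

def l1Bump {ι : Type*} [Fintype ι] (r : ℝ) (a x : ι → ℝ) : ℝ :=
  max (r - ∑ i, |x i - a i|) 0

section L1Bump

variable {ι : Type*} [Fintype ι] {r : ℝ} {a b x : ι → ℝ}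

theorem l1Bump_eq_zero_of_le_abs_sub {i : ι} (h : r ≤ |x i - a i|) : l1Bump r a x = 0 :=
  max_eq_right <| sub_nonpos.2 <| h.trans <|
    Finset.single_le_sum (fun j _ => abs_nonneg (x j - a j)) (Finset.mem_univ i)

theorem l1Bump_eq_zero_or_eq_zero {i : ι} (h : 2 * r ≤ |a i - b i|) (x : ι → ℝ) :
    l1Bump r a x = 0 ∨ l1Bump r b x = 0 := by
  by_cases ha : r ≤ |x i - a i|
  · exact .inl (l1Bump_eq_zero_of_le_abs_sub ha)
  · refine .inr (l1Bump_eq_zero_of_le_abs_sub (i := i) ?_)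
    have := abs_sub_le (a i) (x i) (b i)
    rw [abs_sub_comm (a i) (x i)] at this
    linarith

theorem l1Bump_eq_zero_of_notMem_pi
    (hx : x ∉ Set.univ.pi fun i => Set.Icc (a i - r) (a i + r)) : l1Bump r a x = 0 := by
  simp only [Set.mem_univ_pi, not_forall] at hx
  obtain ⟨i, hi⟩ := hx
  refine l1Bump_eq_zero_of_le_abs_sub (i := i) (le_abs.2 ?_)
  rw [Set.mem_Icc, not_and_or, not_le, not_le] at hi
  rcases hi with hi | hi
  · right; linarith
  · left; linarith

theorem continuous_l1Bump : Continuous (l1Bump r a) := by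
  unfold l1Bump; fun_prop

theorem integrable_l1Bump_pow (p : ℕ) : Integrable fun x => l1Bump r a x ^ (p + 1) := by
  have hK : HasCompactSupport fun x => l1Bump r a x ^ (p + 1) :=
    .intro (isCompact_univ_pi fun i => isCompact_Icc (a := a i - r) (b := a i + r)) fun x hx => by
      rw [l1Bump_eq_zero_of_notMem_pi hx, zero_pow p.succ_ne_zero]
  exact (continuous_l1Bump.pow _).integrable_of_hasCompactSupport hK

theorem l1Bump_sub_center : l1Bump r a x = l1Bump r 0 (x - a) := by
  simp [l1Bump]

end L1Bump

theorem l1Bump_zero_cons {n : ℕ} (r t : ℝ) (y : Fin n → ℝ) :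
    l1Bump r 0 (Fin.cons t y : Fin (n + 1) → ℝ) = l1Bump (r - |t|) 0 y := by
  simp [l1Bump, Fin.sum_univ_succ, sub_sub]

theorem integral_fin_succ_eq_integral_integral_cons {n : ℕ} {f : (Fin (n + 1) → ℝ) → ℝ}
    (hf : Integrable f) : ∫ x, f x = ∫ t, ∫ y, f (Fin.cons t y) := by
  have e := (volume_preserving_piFinSuccAbove (fun _ : Fin (n + 1) => ℝ) 0).symm
  rw [← e.integral_comp', Measure.volume_eq_prod, integral_prod]
  · simp [MeasurableEquiv.piFinSuccAbove_symm_apply, Fin.insertNthEquiv]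
  · rw [← Measure.volume_eq_prod]
    exact (e.integrable_comp_emb (MeasurableEquiv.measurableEmbedding _)).2 hf

theorem integral_max_sub_abs_pow (c : ℝ) (q : ℕ) :
    ∫ t : ℝ, max (c - |t|) 0 ^ (q + 1) = 2 * max c 0 ^ (q + 2) / (q + 2) := by
  rcases le_or_gt c 0 with hc | hc
  · have h0 (t : ℝ) : max (c - |t|) 0 = 0 := max_eq_right (by linarith [abs_nonneg t])
    simp [h0, max_eq_right hc]
  have h_vanish : ∀ t ∈ Set.Ioi 0 \ Set.Ioc 0 c, max (c - t) 0 ^ (q + 1) = 0 := by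
    rintro t ⟨ht₀, htc⟩
    have : c < t := by simpa [Set.mem_Ioi.1 ht₀] using htc
    simp [max_eq_right (sub_nonpos.2 this.le)]
  have h_pos : Set.EqOn (fun t => max (c - t) 0 ^ (q + 1)) (fun t => (c - t) ^ (q + 1))
      (Set.uIcc 0 c) := by
    intro t ht
    rw [Set.uIcc_of_le hc.le] at ht
    simp only [max_eq_left (sub_nonneg.2 ht.2)]
  rw [integral_comp_abs (f := fun t => max (c - t) 0 ^ (q + 1)),
    setIntegral_eq_of_subset_of_forall_sdiff_eq_zero measurableSet_Ioi Set.Ioc_subset_Ioi_self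
      h_vanish,
    ← intervalIntegral.integral_of_le hc.le, intervalIntegral.integral_congr h_pos,
    intervalIntegral.integral_comp_sub_left (fun t => t ^ (q + 1)), integral_pow,
    max_eq_left hc.le]
  push_cast
  ring

theorem integral_l1Bump_zero_pow (n p : ℕ) (r : ℝ) :
    ∫ x : Fin n → ℝ, l1Bump r 0 x ^ (p + 1) =
      2 ^ n * (p + 1).factorial * max r 0 ^ (n + p + 1) / (n + p + 1).factorial := by
  induction n generalizing r with
  | zero =>
    simp [l1Bump, measureReal_def, volume_pi, (p + 1).factorial_ne_zero]
  | succ n ih =>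
    rw [integral_fin_succ_eq_integral_integral_cons (integrable_l1Bump_pow p)]
    simp_rw [l1Bump_zero_cons, ih, mul_div_right_comm _ (max _ _ ^ _), integral_const_mul]
    rw [integral_max_sub_abs_pow, show n + 1 + p + 1 = n + p + 1 + 1 by ring,
      Nat.factorial_succ (n + p + 1)]
    push_cast
    field_simp
    ring

theorem integral_l1Bump_pow (n p : ℕ) (r : ℝ) (a : Fin n → ℝ) :
    ∫ x : Fin n → ℝ, l1Bump r a x ^ (p + 1) =
      2 ^ n * (p + 1).factorial * max r 0 ^ (n + p + 1) / (n + p + 1).factorial := by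
  simp_rw [l1Bump_sub_center (a := a)]
  rw [integral_sub_right_eq_self (fun x => l1Bump r 0 x ^ (p + 1)), integral_l1Bump_zero_pow]

/-- `ℓ i` is `0`-indexed, so this is the paper's `(ℓᵢ - 1/2)/k` with `ℓᵢ ∈ {1, …, k}`. -/
noncomputable def gridCenter {ι : Type*} (k : ℕ) (ℓ : ι → Fin k) (i : ι) : ℝ :=
  ((ℓ i : ℝ) + 1 / 2) / k

section GridCenter

variable {ι : Type*} {k : ℕ}

theorem two_mul_le_abs_gridCenter_sub {ℓ ℓ' : ι → Fin k} {i : ι} (h : ℓ i ≠ ℓ' i) :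
    2 * (1 / (2 * k)) ≤ |gridCenter k ℓ i - gridCenter k ℓ' i| := by
  have h_int : (1 : ℝ) ≤ |(ℓ i : ℝ) - ℓ' i| := by
    have : (ℓ i : ℤ) ≠ ℓ' i := by exact_mod_cast Fin.val_ne_of_ne h
    exact_mod_cast Int.one_le_abs (sub_ne_zero.2 this)
  calc 2 * (1 / (2 * k)) = 1 / (k : ℝ) := by ring
    _ ≤ |(ℓ i : ℝ) - ℓ' i| / k := div_le_div_of_nonneg_right h_int k.cast_nonneg
    _ = |gridCenter k ℓ i - gridCenter k ℓ' i| := by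
      rw [gridCenter, gridCenter, ← sub_div, abs_div, Nat.abs_cast, add_sub_add_right_eq_sub]

theorem pi_Icc_gridCenter_subset_unitCube (ℓ : ι → Fin k) :
    (Set.univ.pi fun i =>
        Set.Icc (gridCenter k ℓ i - 1 / (2 * k)) (gridCenter k ℓ i + 1 / (2 * k))) ⊆
      Set.univ.pi fun _ => Set.Icc 0 1 := by
  refine Set.pi_mono fun i _ => Set.Icc_subset_Icc ?_ ?_
  · rw [show gridCenter k ℓ i - 1 / (2 * k) = (ℓ i : ℝ) / k by unfold gridCenter; ring]
    positivity
  · rw [show gridCenter k ℓ i + 1 / (2 * k) = ((ℓ i : ℝ) + 1) / k by unfold gridCenter; ring]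
    exact div_le_one_of_le₀ (by exact_mod_cast (ℓ i).isLt) k.cast_nonneg

end GridCenter

theorem stmt_8_general (d k : ℕ)
    (f : (Fin d → Fin k) → (Fin d → ℝ) → ℝ)
    (hf : ∀ ℓ x, f ℓ x =
      max (1 / (2 * k) - ∑ i, |x i - ((ℓ i : ℝ) + 1 / 2) / k|) 0) :
    (∀ ℓ ℓ' : Fin d → Fin k, ℓ ≠ ℓ' → ∀ x, f ℓ x = 0 ∨ f ℓ' x = 0) ∧
    (∀ ℓ, ∫ x in Set.univ.pi (fun _ : Fin d => Set.Icc (0:ℝ) 1), (f ℓ x) ^ 2 =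
      (1 / (2 * (Nat.factorial (d + 2)))) * ((k : ℝ) ^ (d + 2))⁻¹) := by
  obtain rfl : f = fun ℓ => l1Bump (1 / (2 * k)) (gridCenter k ℓ) := funext₂ hf
  refine ⟨fun ℓ ℓ' hne x => ?_, fun ℓ => ?_⟩
  · obtain ⟨i, hi⟩ := Function.ne_iff.1 hne
    exact l1Bump_eq_zero_or_eq_zero (two_mul_le_abs_gridCenter_sub hi) x
  · have h_vanish (x) (hx : x ∉ Set.univ.pi fun _ : Fin d => Set.Icc (0 : ℝ) 1) :
        l1Bump (1 / (2 * k)) (gridCenter k ℓ) x ^ 2 = 0 := by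
      rw [l1Bump_eq_zero_of_notMem_pi fun h => hx (pi_Icc_gridCenter_subset_unitCube ℓ h)]
      norm_num
    rw [setIntegral_eq_integral_of_forall_compl_eq_zero h_vanish, integral_l1Bump_pow d 1,
      max_eq_left (by positivity), Nat.factorial_two, one_div, mul_inv, mul_pow, inv_pow, inv_pow]
    field_simp
    ring

/-- The `m = k^d` bump functions `f_a(x) = (1/(2k) - |x - a|₁)₊`, centered at the
grid points `a = ((ℓ₁ - 1/2)/k, …, (ℓ_d - 1/2)/k)`, have pairwise disjoint supports
and squared L² norm `(1/(2(d+2)!)) k^{-(d+2)}` on `[0,1]^d`. -/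
theorem stmt_8 (d k : ℕ) (hd : 1 ≤ d) (hk : 1 ≤ k)
    (f : (Fin d → Fin k) → (Fin d → ℝ) → ℝ)
    (hf : ∀ ℓ x, f ℓ x =
      max (1 / (2 * k) - ∑ i, |x i - ((ℓ i : ℝ) + 1 / 2) / k|) 0) :
    (∀ ℓ ℓ' : Fin d → Fin k, ℓ ≠ ℓ' → ∀ x, f ℓ x = 0 ∨ f ℓ' x = 0) ∧
    (∀ ℓ, ∫ x in Set.univ.pi (fun _ : Fin d => Set.Icc (0:ℝ) 1), (f ℓ x) ^ 2 =
      (1 / (2 * (Nat.factorial (d + 2)))) * ((k : ℝ) ^ (d + 2))⁻¹) :=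
  stmt_8_general d k f hf
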